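/- Link condition lifting: Let A : X → Y and E : Y → Z be bounded linear operators between Hilbert spaces, T = E^* A, and ψ an index function. If there exist constants 0 < m ≤ 1 ≤ M < ∞ with m ||ψ(AA^*) v||_Y ≤ ||(EE^*)^{1/2} v||_Y ≤ M ||ψ(AA^*) v||_Y for all v ∈ Y, then for Θ(λ) := √λ ψ(λ) one has m ||Θ(A^*A) w||_X ≤ ||(T^*T)^{1/2} w||_X ≤ M ||Θ(A^*A) w||_X for all w ∈ X. -/

import Mathlib

/-!
For every operator `S`, `‖(S^*S)^{1/2} x‖ = ‖S x‖`, both squares being `⟨S^*S x, x⟩`.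
Hence `‖(T^*T)^{1/2} w‖ = ‖E^* A w‖ = ‖(EE^*)^{1/2} A w‖`. On the other side,
`(AA^*) A = A (A^*A)`, which by polynomial approximation upgrades to
`ψ(AA^*) A = A ψ(A^*A)`, so `‖ψ(AA^*) A w‖ = ‖(A^*A)^{1/2} ψ(A^*A) w‖ = ‖Θ(A^*A) w‖`.
The link condition at `v = A w` is therefore the claim.
-/

open ContinuousLinearMap

/-- An index function: continuous, non-decreasing, positive on `(0,∞)`, vanishing at `0`. -/
def IndexFun (φ : ℝ → ℝ) : Prop :=
  ContinuousOn φ (Set.Ici 0) ∧ MonotoneOn φ (Set.Ici 0) ∧ (∀ t > 0, 0 < φ t) ∧ φ 0 = 0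

open Filter Set
open Polynomial (aeval aeval_C aeval_X)

theorem aeval_comp_eq_comp_aeval {E F : Type*} [NormedAddCommGroup E] [NormedSpace ℂ E]
    [NormedAddCommGroup F] [NormedSpace ℂ F] {a : F →L[ℂ] F} {b : E →L[ℂ] E} {S : E →L[ℂ] F}
    (h : a ∘L S = S ∘L b) (p : Polynomial ℝ) : aeval a p ∘L S = S ∘L aeval b p := by
  induction p using Polynomial.induction_on with
  | C r =>
    rw [aeval_C, aeval_C, Algebra.algebraMap_eq_smul_one, Algebra.algebraMap_eq_smul_one,
      smul_comp, comp_smul, one_def, one_def, id_comp, comp_id]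
  | add p q hp hq => rw [map_add, map_add, add_comp, comp_add, hp, hq]
  | monomial n r ih =>
    rw [pow_succ, ← mul_assoc, map_mul (aeval a), map_mul (aeval b), aeval_X, aeval_X, mul_def,
      mul_def, comp_assoc, h, ← comp_assoc, ih, comp_assoc]

section

variable {X Z : Type*}
    [NormedAddCommGroup X] [InnerProductSpace ℂ X] [CompleteSpace X]
    [NormedAddCommGroup Z] [InnerProductSpace ℂ Z] [CompleteSpace Z]

theorem norm_cfc_sqrt_adjoint_comp_self_apply (S : X →L[ℂ] Z) (x : X) :
    ‖cfc Real.sqrt (adjoint S ∘L S) x‖ = ‖S x‖ := by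
  set c := adjoint S ∘L S
  have hc : 0 ≤ c := (nonneg_iff_isPositive c).mpr (isPositive_adjoint_comp_self S)
  have hsqrt : adjoint (cfc Real.sqrt c) ∘L cfc Real.sqrt c = c := by
    rw [← star_eq_adjoint, (cfc_predicate Real.sqrt c).star_eq, ← mul_def, ← cfc_mul ..]
    conv_rhs => rw [← cfc_id' ℝ c]
    exact cfc_congr fun t ht => Real.mul_self_sqrt (spectrum_nonneg_of_nonneg hc ht)
  rw [← sq_eq_sq₀ (norm_nonneg _) (norm_nonneg _), apply_norm_sq_eq_inner_adjoint_left,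
    apply_norm_sq_eq_inner_adjoint_left, hsqrt]

variable {a : Z →L[ℂ] Z} {b : X →L[ℂ] X} {S : X →L[ℂ] Z}

theorem cfc_comp_eq_comp_cfc_of_subset_Icc (ha : IsSelfAdjoint a) (hb : IsSelfAdjoint b)
    (hS : a ∘L S = S ∘L b) {r R : ℝ} (hσa : spectrum ℝ a ⊆ Icc r R)
    (hσb : spectrum ℝ b ⊆ Icc r R) (f : ℝ → ℝ) (hf : ContinuousOn f (Icc r R)) :
    cfc f a ∘L S = S ∘L cfc f b := by
  choose p hp using fun n : ℕ =>
    exists_polynomial_near_of_continuousOn r R f hf (1 / (n + 1)) Nat.one_div_pos_of_nat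
  have hunif : TendstoUniformlyOn (fun n => (p n).eval) f atTop (Icc r R) := by
    refine Metric.tendstoUniformlyOn_iff.mpr fun ε hε => ?_
    obtain ⟨N, hN⟩ := exists_nat_one_div_lt hε
    filter_upwards [eventually_ge_atTop N] with n hn x hx
    rw [dist_comm, Real.dist_eq]
    refine (hp n x hx).trans_le (le_trans ?_ hN.le)
    gcongr
  have hpoly : ∀ n, cfc (p n).eval a ∘L S = S ∘L cfc (p n).eval b := fun n => by
    rw [cfc_polynomial _ _ ha, cfc_polynomial _ _ hb, aeval_comp_eq_comp_aeval hS]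
  have hlim_a := tendsto_cfc_fun (hunif.mono hσa) (.of_forall fun n => (p n).continuousOn)
  have hlim_b := tendsto_cfc_fun (hunif.mono hσb) (.of_forall fun n => (p n).continuousOn)
  refine tendsto_nhds_unique (((compL ℂ X Z Z).flip S).continuous.tendsto _ |>.comp hlim_a) ?_
  simp_rw [Function.comp_def, flip_apply, compL_apply, hpoly]
  exact (compL ℂ X X Z S).continuous.tendsto _ |>.comp hlim_b

theorem cfc_comp_eq_comp_cfc (ha : IsSelfAdjoint a) (hb : IsSelfAdjoint b)
    (hS : a ∘L S = S ∘L b) (f : ℝ → ℝ) (hf : ContinuousOn f (spectrum ℝ a ∪ spectrum ℝ b)) :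
    cfc f a ∘L S = S ∘L cfc f b := by
  set s := spectrum ℝ a ∪ spectrum ℝ b
  have hs : IsCompact s := (spectrum.isCompact a).union (spectrum.isCompact b)
  -- `cfc` only sees `f` on the spectrum, so `f` may be replaced by a Tietze extension.
  obtain ⟨g, hg⟩ := ContinuousMap.exists_restrict_eq hs.isClosed ⟨s.domRestrict f, hf.domRestrict⟩
  have hfg : EqOn f g s := fun x hx => congr($hg.symm ⟨x, hx⟩)
  have hs_Icc := subset_Icc_csInf_csSup hs.bddBelow hs.bddAbove
  rw [cfc_congr (hfg.mono subset_union_left), cfc_congr (hfg.mono subset_union_right)]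
  exact cfc_comp_eq_comp_cfc_of_subset_Icc ha hb hS (subset_union_left.trans hs_Icc)
    (subset_union_right.trans hs_Icc) g g.continuous.continuousOn

end

theorem link_condition_lifting_general
    {X Y Z : Type*}
    [NormedAddCommGroup X] [InnerProductSpace ℂ X] [CompleteSpace X]
    [NormedAddCommGroup Y] [InnerProductSpace ℂ Y] [CompleteSpace Y]
    [NormedAddCommGroup Z] [InnerProductSpace ℂ Z] [CompleteSpace Z]
    (A : X →L[ℂ] Z) (E : Y →L[ℂ] Z) (ψ : ℝ → ℝ) (hψ : IndexFun ψ)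
    (m M : ℝ)
    (hlink : ∀ v : Z,
      m * ‖cfc ψ (A.comp (adjoint A)) v‖ ≤ ‖cfc Real.sqrt (E.comp (adjoint E)) v‖ ∧
      ‖cfc Real.sqrt (E.comp (adjoint E)) v‖ ≤ M * ‖cfc ψ (A.comp (adjoint A)) v‖) :
    ∀ w : X,
      m * ‖cfc (fun l => Real.sqrt l * ψ l) ((adjoint A).comp A) w‖ ≤
        ‖cfc Real.sqrt ((adjoint ((adjoint E).comp A)).comp ((adjoint E).comp A)) w‖ ∧
      ‖cfc Real.sqrt ((adjoint ((adjoint E).comp A)).comp ((adjoint E).comp A)) w‖ ≤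
        M * ‖cfc (fun l => Real.sqrt l * ψ l) ((adjoint A).comp A) w‖ := by
  intro w
  have hAA := isPositive_self_comp_adjoint A
  have hAA' := isPositive_adjoint_comp_self A
  have hψ_cont : ContinuousOn ψ (spectrum ℝ (A ∘L adjoint A) ∪ spectrum ℝ (adjoint A ∘L A)) :=
    hψ.1.mono <| union_subset
      (fun t ht => spectrum_nonneg_of_nonneg ((nonneg_iff_isPositive _).mpr hAA) ht)
      (fun t ht => spectrum_nonneg_of_nonneg ((nonneg_iff_isPositive _).mpr hAA') ht)
  have hΘ : ‖cfc ψ (A ∘L adjoint A) (A w)‖ = ‖cfc (fun l => √l * ψ l) (adjoint A ∘L A) w‖ := by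
    rw [← comp_apply, cfc_comp_eq_comp_cfc hAA.isSelfAdjoint hAA'.isSelfAdjoint rfl ψ hψ_cont,
      comp_apply, ← norm_cfc_sqrt_adjoint_comp_self_apply, cfc_mul Real.sqrt ψ _
      Real.continuous_sqrt.continuousOn (hψ_cont.mono subset_union_right)]
    rfl
  have hT : ‖cfc Real.sqrt (adjoint (adjoint E ∘L A) ∘L (adjoint E ∘L A)) w‖ =
      ‖cfc Real.sqrt (E ∘L adjoint E) (A w)‖ := by
    have hE := norm_cfc_sqrt_adjoint_comp_self_apply (adjoint E) (A w)
    rw [adjoint_adjoint] at hE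
    rw [norm_cfc_sqrt_adjoint_comp_self_apply, hE, comp_apply]
  rw [hT, ← hΘ]
  exact hlink (A w)

/-- Link condition lifting: let `A : X → Z` (the forward operator, viewed with values in
the larger space `Z ⊇ Y`), `E : Y → Z` the embedding, and `T = E^* A`.  If
`m ‖ψ(AA^*) v‖ ≤ ‖(EE^*)^{1/2} v‖ ≤ M ‖ψ(AA^*) v‖` for all `v`, then with
`Θ(λ) = √λ ψ(λ)` one has `m ‖Θ(A^*A) w‖ ≤ ‖(T^*T)^{1/2} w‖ ≤ M ‖Θ(A^*A) w‖` for all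
`w ∈ X`.  Operator functions are realized via the continuous functional calculus `cfc`. -/
theorem link_condition_lifting
    {X Y Z : Type*}
    [NormedAddCommGroup X] [InnerProductSpace ℂ X] [CompleteSpace X]
    [NormedAddCommGroup Y] [InnerProductSpace ℂ Y] [CompleteSpace Y]
    [NormedAddCommGroup Z] [InnerProductSpace ℂ Z] [CompleteSpace Z]
    (A : X →L[ℂ] Z) (E : Y →L[ℂ] Z) (ψ : ℝ → ℝ) (hψ : IndexFun ψ)
    (m M : ℝ) (hm : 0 < m) (hm1 : m ≤ 1) (hM : 1 ≤ M)
    (hlink : ∀ v : Z,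
      m * ‖cfc ψ (A.comp (adjoint A)) v‖ ≤ ‖cfc Real.sqrt (E.comp (adjoint E)) v‖ ∧
      ‖cfc Real.sqrt (E.comp (adjoint E)) v‖ ≤ M * ‖cfc ψ (A.comp (adjoint A)) v‖) :
    ∀ w : X,
      m * ‖cfc (fun l => Real.sqrt l * ψ l) ((adjoint A).comp A) w‖ ≤
        ‖cfc Real.sqrt ((adjoint ((adjoint E).comp A)).comp ((adjoint E).comp A)) w‖ ∧
      ‖cfc Real.sqrt ((adjoint ((adjoint E).comp A)).comp ((adjoint E).comp A)) w‖ ≤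
        M * ‖cfc (fun l => Real.sqrt l * ψ l) ((adjoint A).comp A) w‖ :=
  link_condition_lifting_general A E ψ hψ m M hlink
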